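/- G_{p,q} is an Oliver group: there exists no chain of subgroups P ⊴ H ⊴ G_{p,q} such that P and G_{p,q}/H are of prime power order (possibly trivial) and H/P is cyclic. -/

import Mathlib

/-!
If `H/P` is cyclic, every commutator of elements of `H` lies in `P`, and `|H/P|` divides the
exponent of `G_{p,q}`, which divides `2pq`: squares lie in `⟨a, c⟩ ≅ C_{pq} ⋊ C_q`, where `c`
acts trivially modulo `q`, so their `q`-th powers lie in `⟨a^q⟩`.

If `[G : H]` is a power of `2`, then `a, c ∈ H`, so `P` contains `[c, a] = a^{i-1}`, of order `p`,
while `|G| = |H/P| |P| [G : H]` together with `|H/P| ∣ 2pq` forces `q ∣ |P|`. Otherwise the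
involution `b` lies in `H`, hence so does `a`, since `a² = [a, b]` and `a` has odd order; then
`a² = [a, b] ∈ P` gives `a ∈ P` and `pq ∣ |P|`. Either way `|P|` is not a prime power.
-/

open Multiplicative

namespace Mizerka

/-- The standing hypotheses: `p` and `q` are odd primes with `q ∣ p - 1`, and `i` is a
natural number with `i ≡ 1 (mod q)` whose multiplicative order modulo `p` equals `q`. -/
structure Hyp (p q i : ℕ) : Prop where
  hp : Nat.Prime p
  hq : Nat.Prime q
  hoddp : Odd p
  hoddq : Odd q
  hdvd : q ∣ p - 1
  hmod : i ≡ 1 [MOD q]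
  hord : orderOf (i : ZMod p) = q

namespace Hyp

variable {p q i : ℕ}

theorem coprime_q (h : Hyp p q i) : Nat.Coprime i q := by
  have h1 : i % q = 1 % q := h.hmod
  unfold Nat.Coprime
  rw [Nat.gcd_comm, Nat.gcd_rec, h1, ← Nat.gcd_rec, Nat.gcd_one_right]

theorem coprime_p (h : Hyp p q i) : Nat.Coprime i p := by
  haveI : NeZero p := ⟨h.hp.ne_zero⟩
  have hq1 : q - 1 + 1 = q := Nat.succ_pred_eq_of_pos h.hq.pos
  have hmul : (i : ZMod p) * (i : ZMod p) ^ (q - 1) = 1 := by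
    rw [← pow_succ', hq1, ← h.hord, pow_orderOf_eq_one]
  exact (ZMod.isUnit_iff_coprime i p).mp (IsUnit.of_mul_eq_one _ hmul)

theorem coprime (h : Hyp p q i) : Nat.Coprime i (p * q) :=
  Nat.Coprime.mul_right h.coprime_p h.coprime_q

theorem pow_q_modeq (h : Hyp p q i) : i ^ q ≡ 1 [MOD p * q] := by
  have hpq : p ≠ q := by
    have h1 : 0 < p - 1 := by have := h.hp.two_le; omega
    have := Nat.le_of_dvd h1 h.hdvd
    omega
  have hc : Nat.Coprime p q := (Nat.coprime_primes h.hp h.hq).mpr hpq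
  rw [← Nat.modEq_and_modEq_iff_modEq_mul hc]
  constructor
  · haveI : NeZero p := ⟨h.hp.ne_zero⟩
    have hcast : ((i ^ q : ℕ) : ZMod p) = ((1 : ℕ) : ZMod p) := by
      push_cast
      rw [← h.hord, pow_orderOf_eq_one]
    exact (ZMod.natCast_eq_natCast_iff _ _ _).mp hcast
  · calc i ^ q ≡ 1 ^ q [MOD q] := h.hmod.pow q
      _ = 1 := one_pow q

/-- The unit of `ZMod (p*q)` determined by `i`. -/
def unit (h : Hyp p q i) : (ZMod (p * q))ˣ := ZMod.unitOfCoprime i h.coprime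

/-- The unit of `ZMod p` determined by `i`. -/
def unitP (h : Hyp p q i) : (ZMod p)ˣ := ZMod.unitOfCoprime i h.coprime_p

theorem unit_pow (h : Hyp p q i) : h.unit ^ q = 1 := by
  apply Units.ext
  have h2 : ((i ^ q : ℕ) : ZMod (p * q)) = ((1 : ℕ) : ZMod (p * q)) :=
    (ZMod.natCast_eq_natCast_iff _ _ _).mpr h.pow_q_modeq
  push_cast at h2
  simpa [Hyp.unit] using h2

theorem unitP_pow (h : Hyp p q i) : h.unitP ^ q = 1 := by
  apply Units.ext
  have h2 : (i : ZMod p) ^ q = 1 := by rw [← h.hord]; exact pow_orderOf_eq_one _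
  simpa [Hyp.unitP] using h2

end Hyp

/-- Multiplication by a unit, as an automorphism of the (multiplicatively written)
cyclic group `ZMod n`. -/
def zmodMulAut (n : ℕ) : (ZMod n)ˣ →* MulAut (Multiplicative (ZMod n)) where
  toFun u :=
    { toFun := fun x => ofAdd ((u : ZMod n) * x.toAdd)
      invFun := fun x => ofAdd (((u⁻¹ : (ZMod n)ˣ) : ZMod n) * x.toAdd)
      left_inv := fun x => by simp
      right_inv := fun x => by simp
      map_mul' := fun x y => by simp [mul_add, ← ofAdd_add] }
  map_one' := by ext x; simp
  map_mul' u v := by ext x; simp [mul_assoc]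

/-- The function underlying the automorphism of the dihedral group induced by
multiplication by a unit on the rotation part. -/
def dihedralAutFun (n : ℕ) (u : (ZMod n)ˣ) : DihedralGroup n → DihedralGroup n
  | .r j => .r ((u : ZMod n) * j)
  | .sr j => .sr ((u : ZMod n) * j)

/-- Multiplication of indices by a unit, as an automorphism of the dihedral group:
`a ↦ a^u`, `b ↦ b`. -/
def dihedralAut (n : ℕ) : (ZMod n)ˣ →* MulAut (DihedralGroup n) where
  toFun u :=
    { toFun := dihedralAutFun n u
      invFun := dihedralAutFun n u⁻¹
      left_inv := fun x => by cases x <;> simp [dihedralAutFun]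
      right_inv := fun x => by cases x <;> simp [dihedralAutFun]
      map_mul' := fun x y => by cases x <;> cases y <;> simp [dihedralAutFun, mul_add, mul_sub] }
  map_one' := by ext x; cases x <;> simp [dihedralAutFun]
  map_mul' u v := by ext x; cases x <;> simp [dihedralAutFun, mul_assoc]

/-- The homomorphism `ZMod q →* G` (written multiplicatively) sending `1` to a fixed
element `g` with `g ^ q = 1`. -/
def zmodPow {G : Type*} [Group G] (q : ℕ) [NeZero q] (g : G) (hg : g ^ q = 1) :
    Multiplicative (ZMod q) →* G where
  toFun x := g ^ (toAdd x).val
  map_one' := by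
    show g ^ (toAdd (1 : Multiplicative (ZMod q))).val = 1
    rw [toAdd_one, ZMod.val_zero, pow_zero]
  map_mul' x y := by
    have key : ∀ m : ℕ, g ^ (m % q) = g ^ m := fun m => by
      conv_rhs => rw [← Nat.div_add_mod m q]
      rw [pow_add, pow_mul, hg, one_pow, one_mul]
    show g ^ (toAdd (x * y)).val = g ^ (toAdd x).val * g ^ (toAdd y).val
    rw [toAdd_mul, ZMod.val_add, key, pow_add]

namespace Hyp

variable {p q i : ℕ}

/-- The action of `C_q` on `C_{pq}` sending the generator to multiplication by `i`. -/
def phiN (h : Hyp p q i) : Multiplicative (ZMod q) →* MulAut (Multiplicative (ZMod (p * q))) :=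
  haveI : NeZero q := ⟨h.hq.ne_zero⟩
  zmodPow q (zmodMulAut (p * q) h.unit) (by rw [← map_pow, h.unit_pow, map_one])

/-- The action of `C_q` on `D_{2pq}` sending the generator to `τ` (`τ(a) = a^i`, `τ(b) = b`). -/
def phiG (h : Hyp p q i) : Multiplicative (ZMod q) →* MulAut (DihedralGroup (p * q)) :=
  haveI : NeZero q := ⟨h.hq.ne_zero⟩
  zmodPow q (dihedralAut (p * q) h.unit) (by rw [← map_pow, h.unit_pow, map_one])

/-- The action of `C_q` on `C_p` sending the generator to multiplication by `i`. -/
def phiF (h : Hyp p q i) : Multiplicative (ZMod q) →* MulAut (Multiplicative (ZMod p)) :=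
  haveI : NeZero q := ⟨h.hq.ne_zero⟩
  zmodPow q (zmodMulAut p h.unitP) (by rw [← map_pow, h.unitP_pow, map_one])

end Hyp

/-- The group `N_{pq²} = ⟨a, c ∣ a^{pq} = c^q = 1, c a c⁻¹ = a^i⟩ = C_{pq} ⋊ C_q`. -/
abbrev Npq2 {p q i : ℕ} (h : Hyp p q i) : Type :=
  Multiplicative (ZMod (p * q)) ⋊[h.phiN] Multiplicative (ZMod q)

/-- The group `G_{p,q} = D_{2pq} ⋊_φ C_q`. -/
abbrev Gpq {p q i : ℕ} (h : Hyp p q i) : Type :=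
  DihedralGroup (p * q) ⋊[h.phiG] Multiplicative (ZMod q)

/-- The Frobenius group `F_{p,q} = C_p ⋊ C_q` (the nonabelian group of order `pq`). -/
abbrev Fpq {p q i : ℕ} (h : Hyp p q i) : Type :=
  Multiplicative (ZMod p) ⋊[h.phiF] Multiplicative (ZMod q)

variable {p q i : ℕ}

/-- The generator `a` of `N_{pq²}`. -/
def aN (h : Hyp p q i) : Npq2 h := SemidirectProduct.inl (ofAdd 1)

/-- The generator `c` of `N_{pq²}`. -/
def cN (h : Hyp p q i) : Npq2 h := SemidirectProduct.inr (ofAdd 1)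

/-- The generator `a` of `G_{p,q}`. -/
def aG (h : Hyp p q i) : Gpq h := SemidirectProduct.inl (DihedralGroup.r 1)

/-- The generator `b` of `G_{p,q}`. -/
def bG (h : Hyp p q i) : Gpq h := SemidirectProduct.inl (DihedralGroup.sr 0)

/-- The generator `c` of `G_{p,q}`. -/
def cG (h : Hyp p q i) : Gpq h := SemidirectProduct.inr (ofAdd 1)

/-- The real conjugacy class `(g)^± = (g) ∪ (g⁻¹)`. -/
def realClass {G : Type*} [Group G] (g : G) : Set G := {x | IsConj g x ∨ IsConj g⁻¹ x}

/-- `N` is a normal subgroup whose quotient is an `ℓ`-group (the quotient has `ℓ`-power order,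
i.e. `N` has `ℓ`-power index). -/
def OQuot {G : Type*} [Group G] (ℓ : ℕ) (N : Subgroup G) : Prop :=
  N.Normal ∧ ∃ k : ℕ, N.index = ℓ ^ k

/-- `H` is a large subgroup of `G`: it contains `O^ℓ(G)`, the smallest normal subgroup
with `ℓ`-group quotient, for some prime `ℓ`. -/
def IsLarge {G : Type*} [Group G] (H : Subgroup G) : Prop :=
  ∃ ℓ : ℕ, Nat.Prime ℓ ∧
    ∃ N : Subgroup G, OQuot ℓ N ∧ (∀ M : Subgroup G, OQuot ℓ M → N ≤ M) ∧ N ≤ H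

section Reps

variable {k : Type*} [CommSemiring k] {G : Type*} [Group G]

/-- The subspace `V^H` of `H`-fixed vectors of a representation. -/
def fixedPts {V : Type*} [AddCommMonoid V] [Module k V]
    (ρ : Representation k G V) (H : Subgroup G) : Submodule k V where
  carrier := {v | ∀ g ∈ H, ρ g v = v}
  add_mem' := by
    intro a b ha hb g hg
    rw [map_add, ha g hg, hb g hg]
  zero_mem' := by
    intro g hg
    rw [map_zero]
  smul_mem' := by
    intro c v hv g hg
    rw [map_smul, hv g hg]

end Reps

/-- The weak gap condition for a real representation: `dim V^P ≥ 2 dim V^H` for all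
`P < H ≤ G` with `P` of prime power order. -/
def WeakGap {G : Type*} [Group G] {V : Type*} [AddCommGroup V] [Module ℝ V]
    (ρ : Representation ℝ G V) : Prop :=
  ∀ P H : Subgroup G, P < H → (∃ ℓ k : ℕ, Nat.Prime ℓ ∧ Nat.card P = ℓ ^ k) →
    2 * Module.finrank ℝ (fixedPts ρ H) ≤ Module.finrank ℝ (fixedPts ρ P)

/-- Isomorphism of real representations: an equivariant linear equivalence. -/
def RepIso {G : Type*} [Group G] {U V : Type*} [AddCommGroup U] [Module ℝ U]
    [AddCommGroup V] [Module ℝ V]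
    (ρU : Representation ℝ G U) (ρV : Representation ℝ G V) : Prop :=
  ∃ e : U ≃ₗ[ℝ] V, ∀ (g : G) (u : U), e (ρU g u) = ρV g (e u)

/-- Two real representations are `𝒫`-matched if their restrictions to every subgroup of
prime power order are isomorphic. -/
def PMatched {G : Type*} [Group G] {U V : Type*} [AddCommGroup U] [Module ℝ U]
    [AddCommGroup V] [Module ℝ V]
    (ρU : Representation ℝ G U) (ρV : Representation ℝ G V) : Prop :=
  ∀ P : Subgroup G, (∃ ℓ k : ℕ, Nat.Prime ℓ ∧ Nat.card P = ℓ ^ k) →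
    RepIso (ρU.comp P.subtype) (ρV.comp P.subtype)

/-- A bundled finite-dimensional-free real representation of `G`. -/
structure RealRep (G : Type*) [Group G] where
  carrier : Type
  [acg : AddCommGroup carrier]
  [mod : Module ℝ carrier]
  rho : Representation ℝ G carrier

attribute [instance] RealRep.acg RealRep.mod

theorem dihedralAut_pow_r (n : ℕ) (u : (ZMod n)ˣ) (k : ℕ) (m : ZMod n) :
    ((dihedralAut n u) ^ k) (DihedralGroup.r m)
      = DihedralGroup.r (((u ^ k : (ZMod n)ˣ) : ZMod n) * m) := by
  induction k generalizing m with
  | zero => simp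
  | succ k ih =>
    rw [pow_succ, MulAut.mul_apply]
    have h1 : (dihedralAut n u) (DihedralGroup.r m) = DihedralGroup.r ((u : ZMod n) * m) := rfl
    rw [h1, ih, pow_succ, Units.val_mul, mul_assoc]

theorem Hyp.phiG_r (h : Hyp p q i) (z : Multiplicative (ZMod q)) (m : ZMod (p * q)) :
    h.phiG z (DihedralGroup.r m)
      = DihedralGroup.r (((h.unit ^ (toAdd z).val : (ZMod (p * q))ˣ) : ZMod (p * q)) * m) := by
  have h1 : h.phiG z = (dihedralAut (p * q) h.unit) ^ (toAdd z).val := rfl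
  rw [h1, dihedralAut_pow_r]

theorem r_inv (n : ℕ) (m : ZMod n) : (DihedralGroup.r m)⁻¹ = DihedralGroup.r (-m) := rfl

/-- The subgroup `N_{pq²} = {(aˡ, cᵐ)}` of `G_{p,q}`. -/
def NSub (h : Hyp p q i) : Subgroup (Gpq h) where
  carrier := {x | ∃ l : ZMod (p * q), x.left = DihedralGroup.r l}
  one_mem' := ⟨0, rfl⟩
  mul_mem' := by
    rintro x y ⟨lx, hx⟩ ⟨ly, hy⟩
    refine ⟨lx + (h.unit ^ (toAdd x.right).val : (ZMod (p * q))ˣ) * ly, ?_⟩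
    rw [SemidirectProduct.mul_left, hx, hy, h.phiG_r, DihedralGroup.r_mul_r]
  inv_mem' := by
    rintro x ⟨lx, hx⟩
    refine ⟨-((h.unit ^ (toAdd x.right⁻¹).val : (ZMod (p * q))ˣ) * lx), ?_⟩
    rw [SemidirectProduct.inv_left, hx, r_inv, h.phiG_r]
    congr 1
    ring

/-- The subgroup `N_{2pq} = {(bᵉaˡ, 1)} ≅ D_{2pq}` of `G_{p,q}`. -/
def N2pqSub (h : Hyp p q i) : Subgroup (Gpq h) :=
  MonoidHom.ker SemidirectProduct.rightHom

/-- The subgroup `N¹_{pq} = {(aˡ, 1)}` of `G_{p,q}`. -/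
def NpqOneSub (h : Hyp p q i) : Subgroup (Gpq h) where
  carrier := {x | x.right = 1 ∧ ∃ l : ZMod (p * q), x.left = DihedralGroup.r l}
  one_mem' := ⟨rfl, 0, rfl⟩
  mul_mem' := by
    rintro x y ⟨hx1, lx, hx⟩ ⟨hy1, ly, hy⟩
    refine ⟨by rw [SemidirectProduct.mul_right, hx1, hy1, mul_one],
      lx + (h.unit ^ (toAdd x.right).val : (ZMod (p * q))ˣ) * ly, ?_⟩
    rw [SemidirectProduct.mul_left, hx, hy, h.phiG_r, DihedralGroup.r_mul_r]
  inv_mem' := by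
    rintro x ⟨hx1, lx, hx⟩
    refine ⟨by rw [SemidirectProduct.inv_right, hx1, inv_one],
      -((h.unit ^ (toAdd x.right⁻¹).val : (ZMod (p * q))ˣ) * lx), ?_⟩
    rw [SemidirectProduct.inv_left, hx, r_inv, h.phiG_r]
    congr 1
    ring

/-- The subgroup `N²_{pq} = {(a^{qs}, cᵐ)}` of `G_{p,q}`. -/
def NpqTwoSub (h : Hyp p q i) : Subgroup (Gpq h) where
  carrier := {x | ∃ s : ZMod (p * q), x.left = DihedralGroup.r ((q : ZMod (p * q)) * s)}
  one_mem' := ⟨0, by rw [mul_zero]; rfl⟩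
  mul_mem' := by
    rintro x y ⟨sx, hx⟩ ⟨sy, hy⟩
    refine ⟨sx + (h.unit ^ (toAdd x.right).val : (ZMod (p * q))ˣ) * sy, ?_⟩
    rw [SemidirectProduct.mul_left, hx, hy, h.phiG_r, DihedralGroup.r_mul_r]
    congr 1
    ring
  inv_mem' := by
    rintro x ⟨sx, hx⟩
    refine ⟨-((h.unit ^ (toAdd x.right⁻¹).val : (ZMod (p * q))ˣ) * sx), ?_⟩
    rw [SemidirectProduct.inv_left, hx, r_inv, h.phiG_r]
    congr 1
    ring

/-- The subgroup `N_p = {(a^{qs}, 1)}` of `G_{p,q}`. -/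
def NpSub (h : Hyp p q i) : Subgroup (Gpq h) where
  carrier := {x | x.right = 1 ∧ ∃ s : ZMod (p * q), x.left = DihedralGroup.r ((q : ZMod (p * q)) * s)}
  one_mem' := ⟨rfl, 0, by rw [mul_zero]; rfl⟩
  mul_mem' := by
    rintro x y ⟨hx1, sx, hx⟩ ⟨hy1, sy, hy⟩
    refine ⟨by rw [SemidirectProduct.mul_right, hx1, hy1, mul_one],
      sx + (h.unit ^ (toAdd x.right).val : (ZMod (p * q))ˣ) * sy, ?_⟩
    rw [SemidirectProduct.mul_left, hx, hy, h.phiG_r, DihedralGroup.r_mul_r]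
    congr 1
    ring
  inv_mem' := by
    rintro x ⟨hx1, sx, hx⟩
    refine ⟨by rw [SemidirectProduct.inv_right, hx1, inv_one],
      -((h.unit ^ (toAdd x.right⁻¹).val : (ZMod (p * q))ˣ) * sx), ?_⟩
    rw [SemidirectProduct.inv_left, hx, r_inv, h.phiG_r]
    congr 1
    ring

/-- The subgroup `N_q = {(a^{ps}, 1)}` of `G_{p,q}`. -/
def NqSub (h : Hyp p q i) : Subgroup (Gpq h) where
  carrier := {x | x.right = 1 ∧ ∃ s : ZMod (p * q), x.left = DihedralGroup.r ((p : ZMod (p * q)) * s)}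
  one_mem' := ⟨rfl, 0, by rw [mul_zero]; rfl⟩
  mul_mem' := by
    rintro x y ⟨hx1, sx, hx⟩ ⟨hy1, sy, hy⟩
    refine ⟨by rw [SemidirectProduct.mul_right, hx1, hy1, mul_one],
      sx + (h.unit ^ (toAdd x.right).val : (ZMod (p * q))ˣ) * sy, ?_⟩
    rw [SemidirectProduct.mul_left, hx, hy, h.phiG_r, DihedralGroup.r_mul_r]
    congr 1
    ring
  inv_mem' := by
    rintro x ⟨hx1, sx, hx⟩
    refine ⟨by rw [SemidirectProduct.inv_right, hx1, inv_one],
      -((h.unit ^ (toAdd x.right⁻¹).val : (ZMod (p * q))ˣ) * sx), ?_⟩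
    rw [SemidirectProduct.inv_left, hx, r_inv, h.phiG_r]
    congr 1
    ring

end Mizerka

open scoped commutatorElement

theorem Subgroup.mem_of_pow_mem_of_coprime {G : Type*} [Group G] {K : Subgroup G} {g : G}
    {n : ℕ} (hg : g ^ n ∈ K) (hn : n.Coprime (orderOf g)) : g ∈ K := by
  obtain ⟨m, hm⟩ := exists_pow_eq_self_of_coprime hn
  exact hm ▸ pow_mem hg m

theorem Subgroup.mem_of_coprime_index {G : Type*} [Group G] {H : Subgroup G} [H.Normal] {g : G}
    (hg : H.index.Coprime (orderOf g)) : g ∈ H :=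
  mem_of_pow_mem_of_coprime (H.pow_index_mem g) hg

theorem Subgroup.commutatorElement_mem_map_of_isCyclic {G : Type*} [Group G] {H : Subgroup G}
    (P : Subgroup H) [P.Normal] [IsCyclic (H ⧸ P)] {x y : G} (hx : x ∈ H) (hy : y ∈ H) :
    ⁅x, y⁆ ∈ P.map H.subtype := by
  have hcomm : _root_.commutator H ≤ P :=
    Subgroup.Normal.quotient_commutative_iff_commutator_le.mp inferInstance
  exact ⟨⁅⟨x, hx⟩, ⟨y, hy⟩⁆, hcomm (commutator_mem_commutator (mem_top _) (mem_top _)), rfl⟩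

theorem Subgroup.card_quotient_dvd_exponent_of_isCyclic {G : Type*} [Group G] {H : Subgroup G}
    (P : Subgroup H) [P.Normal] [IsCyclic (H ⧸ P)] : Nat.card (H ⧸ P) ∣ Monoid.exponent G := by
  rw [← IsCyclic.exponent_eq_card]
  exact (MonoidHom.exponent_dvd (QuotientGroup.mk'_surjective P)).trans
    (Monoid.exponent_dvd_of_monoidHom H.subtype H.subtype_injective)

namespace Mizerka

variable {p q i : ℕ}

namespace Hyp

theorem p_ne_q (h : Hyp p q i) : p ≠ q := by
  have hle : q ≤ p - 1 := Nat.le_of_dvd (Nat.sub_pos_of_lt h.hp.one_lt) h.hdvd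
  have := h.hp.one_lt
  omega

theorem false_of_dvd_prime_pow (h : Hyp p q i) {ℓ k : ℕ} (hℓ : ℓ.Prime) (hp : p ∣ ℓ ^ k)
    (hq : q ∣ ℓ ^ k) : False :=
  h.p_ne_q <| ((Nat.prime_dvd_prime_iff_eq h.hp hℓ).mp (h.hp.dvd_of_dvd_pow hp)).trans
    ((Nat.prime_dvd_prime_iff_eq h.hq hℓ).mp (h.hq.dvd_of_dvd_pow hq)).symm

theorem natCast_mul_unit_pow (h : Hyp p q i) (n : ℕ) :
    (p : ZMod (p * q)) * ((h.unit ^ n : (ZMod (p * q))ˣ) : ZMod (p * q)) = p := by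
  have hmod : p * i ^ n ≡ p [MOD p * q] := by
    simpa using Nat.ModEq.mul_left' p (h.hmod.pow n)
  rw [Units.val_pow_eq_pow_val, Hyp.unit, ZMod.coe_unitOfCoprime]
  exact_mod_cast (ZMod.natCast_eq_natCast_iff _ _ _).mpr hmod

theorem natCast_ne_one (h : Hyp p q i) : (i : ZMod (p * q)) ≠ 1 := by
  intro hi
  have hip : (i : ZMod p) = 1 := by
    simpa using congrArg (ZMod.castHom (dvd_mul_right p q) (ZMod p)) hi
  exact h.hq.one_lt.ne' (by rw [← h.hord, hip, orderOf_one])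

theorem phiG_sr (h : Hyp p q i) (z : Multiplicative (ZMod q)) (m : ZMod (p * q)) :
    h.phiG z (DihedralGroup.sr m)
      = DihedralGroup.sr (((h.unit ^ (toAdd z).val : (ZMod (p * q))ˣ) : ZMod (p * q)) * m) := by
  have hφ : h.phiG z = dihedralAut (p * q) (h.unit ^ (toAdd z).val) := (map_pow _ _ _).symm
  rw [hφ]
  rfl

end Hyp

section Gpq

variable (h : Hyp p q i)

theorem card_Gpq : Nat.card (Gpq h) = 2 * (p * q) * q := by
  rw [SemidirectProduct.card, DihedralGroup.nat_card, Nat.card_congr Multiplicative.toAdd,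
    Nat.card_zmod]

theorem orderOf_aG : orderOf (aG h) = p * q := by
  rw [aG, orderOf_injective _ SemidirectProduct.inl_injective, DihedralGroup.orderOf_r_one]

theorem orderOf_bG : orderOf (bG h) = 2 := by
  rw [bG, orderOf_injective _ SemidirectProduct.inl_injective, DihedralGroup.orderOf_sr]

theorem orderOf_cG : orderOf (cG h) = q := by
  rw [cG, orderOf_injective _ SemidirectProduct.inr_injective, orderOf_ofAdd_eq_addOrderOf,
    ZMod.addOrderOf_one]

theorem commutatorElement_aG_bG : ⁅aG h, bG h⁆ = aG h ^ 2 := by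
  rw [commutatorElement_def, aG, bG, ← map_inv, ← map_inv, ← map_mul, ← map_mul, ← map_mul,
    ← map_pow]
  congr 1
  simp [one_add_one_eq_two]

theorem commutatorElement_cG_aG :
    ⁅cG h, aG h⁆ = SemidirectProduct.inl (DihedralGroup.r ((i : ZMod (p * q)) - 1)) := by
  have : Fact (1 < q) := ⟨h.hq.one_lt⟩
  have hconj : cG h * aG h * (cG h)⁻¹ =
      SemidirectProduct.inl (h.phiG (ofAdd 1) (DihedralGroup.r 1)) := by
    rw [cG, aG, ← map_inv]
    exact (SemidirectProduct.inl_aut _ _).symm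
  rw [commutatorElement_def, hconj, aG, ← map_inv, ← map_mul, h.phiG_r, toAdd_ofAdd, ZMod.val_one,
    pow_one, Hyp.unit, ZMod.coe_unitOfCoprime, mul_one, DihedralGroup.inv_r, DihedralGroup.r_mul_r,
    sub_eq_add_neg]

theorem orderOf_commutatorElement_cG_aG : orderOf ⁅cG h, aG h⁆ = p := by
  have : Fact p.Prime := ⟨h.hp⟩
  rw [commutatorElement_cG_aG, orderOf_injective _ SemidirectProduct.inl_injective]
  apply orderOf_eq_prime
  · have hpi := h.natCast_mul_unit_pow 1
    rw [pow_one, Hyp.unit, ZMod.coe_unitOfCoprime] at hpi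
    rw [DihedralGroup.r_pow, sub_mul, one_mul, mul_comm _ (p : ZMod (p * q)), hpi, sub_self,
      DihedralGroup.r_zero]
  · intro hr
    exact h.natCast_ne_one (sub_eq_zero.mp (DihedralGroup.r.inj hr))

theorem mk_r_pow (l : ZMod (p * q)) (z : Multiplicative (ZMod q)) (n : ℕ) :
    (⟨DihedralGroup.r l, z⟩ : Gpq h) ^ n =
      ⟨DihedralGroup.r (l * ∑ j ∈ Finset.range n,
        ((h.unit ^ (toAdd z).val : (ZMod (p * q))ˣ) : ZMod (p * q)) ^ j), z ^ n⟩ := by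
  induction n with
  | zero => ext <;> simp [-DihedralGroup.r_zero, DihedralGroup.one_def]
  | succ n ih =>
    rw [pow_succ', ih]
    ext
    · show DihedralGroup.r l * h.phiG z (DihedralGroup.r _) = DihedralGroup.r _
      rw [h.phiG_r, DihedralGroup.r_mul_r, geom_sum_succ]
      congr 1
      ring
    · exact (pow_succ' z n).symm

theorem sq_mem_NSub (x : Gpq h) : x ^ 2 ∈ NSub h := by
  obtain ⟨d, z⟩ := x
  show ∃ l, (_ : DihedralGroup (p * q)) = _
  rcases d with l | l
  · rw [pow_two, SemidirectProduct.mul_left, h.phiG_r, DihedralGroup.r_mul_r]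
    exact ⟨_, rfl⟩
  · rw [pow_two, SemidirectProduct.mul_left, h.phiG_sr, DihedralGroup.sr_mul_sr]
    exact ⟨_, rfl⟩

theorem pow_mul_eq_one_of_mem_NSub {y : Gpq h} (hy : y ∈ NSub h) : y ^ (q * p) = 1 := by
  obtain ⟨l, hl⟩ := hy
  obtain ⟨d, z⟩ := y
  obtain rfl : d = DihedralGroup.r l := hl
  have hzq : z ^ q = 1 := by
    rw [← ofAdd_toAdd z, ← ofAdd_nsmul, nsmul_eq_mul, ZMod.natCast_self, zero_mul, ofAdd_zero]
  have hsum : (∑ j ∈ Finset.range q,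
      ((h.unit ^ (toAdd z).val : (ZMod (p * q))ˣ) : ZMod (p * q)) ^ j) * p = 0 := by
    simp_rw [Finset.sum_mul, ← Units.val_pow_eq_pow_val, ← pow_mul, mul_comm _ (p : ZMod (p * q)),
      h.natCast_mul_unit_pow, Finset.sum_const, Finset.card_range, nsmul_eq_mul]
    rw [mul_comm, ← Nat.cast_mul, ZMod.natCast_self]
  rw [pow_mul, mk_r_pow, hzq]
  show (SemidirectProduct.inl (DihedralGroup.r _) : Gpq h) ^ p = 1
  rw [← map_pow, DihedralGroup.r_pow, mul_assoc, hsum, mul_zero, DihedralGroup.r_zero, map_one]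

theorem exponent_Gpq_dvd : Monoid.exponent (Gpq h) ∣ 2 * (p * q) := by
  refine Monoid.exponent_dvd_of_forall_pow_eq_one fun x => ?_
  rw [show 2 * (p * q) = 2 * (q * p) by ring, pow_mul]
  exact pow_mul_eq_one_of_mem_NSub h (sq_mem_NSub h x)

variable {H : Subgroup (Gpq h)} (P : Subgroup H) [P.Normal] [IsCyclic (H ⧸ P)]

theorem p_dvd_card_of_aG_mem_of_cG_mem (ha : aG h ∈ H) (hc : cG h ∈ H) : p ∣ Nat.card P := by
  rw [← Subgroup.card_map_of_injective H.subtype_injective]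
  exact (orderOf_commutatorElement_cG_aG h).symm.dvd.trans
    (Subgroup.orderOf_dvd_natCard _ (Subgroup.commutatorElement_mem_map_of_isCyclic P hc ha))

theorem q_dvd_card_of_coprime_index (hH : H.index.Coprime q) : q ∣ Nat.card P := by
  have hG : 2 * (p * q) * q = Nat.card (H ⧸ P) * (Nat.card P * H.index) := by
    rw [← card_Gpq h, ← H.card_mul_index, P.card_eq_card_quotient_mul_card_subgroup, mul_assoc]
  have hdvd : 2 * (p * q) * q ∣ 2 * (p * q) * (Nat.card P * H.index) :=
    hG ▸ mul_dvd_mul_right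
      ((Subgroup.card_quotient_dvd_exponent_of_isCyclic P).trans (exponent_Gpq_dvd h)) _
  exact hH.symm.dvd_of_dvd_mul_right
    (Nat.dvd_of_mul_dvd_mul_left (Nat.mul_pos two_pos (Nat.mul_pos h.hp.pos h.hq.pos)) hdvd)

theorem mul_dvd_card_of_bG_mem [H.Normal] (hb : bG h ∈ H) : p * q ∣ Nat.card P := by
  have ha_coprime : (2 : ℕ).Coprime (orderOf (aG h)) := by
    rw [orderOf_aG]
    exact Nat.coprime_two_left.mpr (h.hoddp.mul h.hoddq)
  have ha : aG h ∈ H := by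
    refine Subgroup.mem_of_pow_mem_of_coprime ?_ ha_coprime
    rw [← commutatorElement_aG_bG, commutatorElement_def]
    exact H.mul_mem (Subgroup.Normal.conj_mem inferInstance _ hb _) (H.inv_mem hb)
  have haP : aG h ∈ P.map H.subtype := Subgroup.mem_of_pow_mem_of_coprime
    (commutatorElement_aG_bG h ▸ Subgroup.commutatorElement_mem_map_of_isCyclic P ha hb)
    ha_coprime
  rw [← Subgroup.card_map_of_injective H.subtype_injective]
  exact (orderOf_aG h).symm.dvd.trans (Subgroup.orderOf_dvd_natCard _ haP)

end Gpq

end Mizerka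

open Mizerka in
/-- `G_{p,q}` is an Oliver group: there is no chain `P ⊴ H ⊴ G_{p,q}` with
`P` and `G_{p,q}/H` of prime power order (possibly trivial) and `H/P` cyclic. -/
theorem statement_19 {p q i : ℕ} (h : Hyp p q i) :
    ¬ ∃ (H : Subgroup (Gpq h)) (P : Subgroup ↥H),
      H.Normal ∧
      (∃ ℓ k : ℕ, Nat.Prime ℓ ∧ Nat.card P = ℓ ^ k) ∧
      (∃ ℓ k : ℕ, Nat.Prime ℓ ∧ H.index = ℓ ^ k) ∧
      (∃ hP : P.Normal, haveI := hP; IsCyclic (↥H ⧸ P)) := by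
  rintro ⟨H, P, hHn, ⟨ℓ, k, hℓ, hP⟩, ⟨ℓ', k', hℓ', hH⟩, hPn, hcyc⟩
  rcases eq_or_ne ℓ' 2 with rfl | h2
  · have hcop : ∀ n, Odd n → H.index.Coprime n := fun n hn =>
      hH ▸ Nat.Coprime.pow_left _ (Nat.coprime_two_left.mpr hn)
    have ha : aG h ∈ H := Subgroup.mem_of_coprime_index <| by
      rw [orderOf_aG]
      exact hcop _ (h.hoddp.mul h.hoddq)
    have hc : cG h ∈ H := Subgroup.mem_of_coprime_index <| by
      rw [orderOf_cG]
      exact hcop _ h.hoddq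
    exact h.false_of_dvd_prime_pow hℓ (hP ▸ p_dvd_card_of_aG_mem_of_cG_mem h P ha hc)
      (hP ▸ q_dvd_card_of_coprime_index h P (hcop q h.hoddq))
  · have hb : bG h ∈ H := Subgroup.mem_of_coprime_index <| by
      rw [orderOf_bG, hH]
      exact Nat.Coprime.pow_left _ ((Nat.coprime_primes hℓ' Nat.prime_two).mpr h2)
    have hpq := hP ▸ mul_dvd_card_of_bG_mem h P hb
    exact h.false_of_dvd_prime_pow hℓ (dvd_of_mul_right_dvd hpq) (dvd_of_mul_left_dvd hpq)
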